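/- Let k ∈ ℝ, let w_A, w_B : ℝ → ℂ be C^∞ pseudo-bosonic superpotentials (w_A + w_B = x + k), let s_A, s_B be antiderivatives with s_A(x) + s_B(x) = x²/2 + kx, and let φ_n = c_n·ρ_A, Ψ_n = c_n·ρ_B be the associated eigenfunctions, where {c_n} is the orthonormal basis of shifted Hermite functions and ρ_A(x) = N_φ (2π)^{1/4} e^{(x+k)²/4} e^{−s_A(x)}, ρ_B(x) = N_Ψ (2π)^{1/4} e^{(x+k)²/4} e^{−conj(s_B(x))}. If ρ_A and ρ_B are essentially bounded (belong to L^∞(ℝ)), then all φ_n and Ψ_n belong to L²(ℝ), and for every n ≥ 0 one has ‖φ_n‖ ≤ ‖ρ_A‖_∞ and ‖Ψ_n‖ ≤ ‖ρ_B‖_∞, where ‖·‖ is the L² norm and ‖·‖_∞ the essential supremum norm. -/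

import Mathlib

open MeasureTheory

noncomputable section

/-- The `n`-th physicists' Hermite polynomial, `H_n(y) = 2^{n/2} He_n(√2 y)`. -/
def physHermite (n : ℕ) (y : ℝ) : ℝ :=
  (Real.sqrt 2) ^ n * Polynomial.aeval (Real.sqrt 2 * y) (Polynomial.hermite n)

/-- `c_n(x) = 2^{-1/4} (2ⁿ n! √π)^{-1/2} H_n((x+k)/√2) e^{-(x+k)²/4}`. -/
def cFun (k : ℝ) (n : ℕ) (x : ℝ) : ℝ :=
  (2 : ℝ) ^ (-(1 : ℝ) / 4) *
    (1 / Real.sqrt ((2 : ℝ) ^ n * n.factorial * Real.sqrt Real.pi)) *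
    physHermite n ((x + k) / Real.sqrt 2) * Real.exp (-(x + k) ^ 2 / 4)

/-- `ρ_A(x) = N_φ (2π)^{1/4} e^{(x+k)²/4} e^{-s_A(x)}`. -/
def rhoA (k : ℝ) (sA : ℝ → ℂ) (Nφ : ℂ) (x : ℝ) : ℂ :=
  Nφ * ((2 * Real.pi) ^ ((1 : ℝ) / 4) : ℝ) *
    Complex.exp (((x : ℂ) + (k : ℂ)) ^ 2 / 4) * Complex.exp (-sA x)

/-- `ρ_B(x) = N_Ψ (2π)^{1/4} e^{(x+k)²/4} e^{-conj s_B(x)}`. -/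
def rhoB (k : ℝ) (sB : ℝ → ℂ) (NΨ : ℂ) (x : ℝ) : ℂ :=
  NΨ * ((2 * Real.pi) ^ ((1 : ℝ) / 4) : ℝ) *
    Complex.exp (((x : ℂ) + (k : ℂ)) ^ 2 / 4) *
    Complex.exp (-(starRingEnd ℂ) (sB x))

namespace Stmt13Aux

open Polynomial Real Filter
open scoped ENNReal

def G (x : ℝ) : ℝ := Real.exp (-(x ^ 2 / 2))

lemma pow_mul_exp_le (n : ℕ) (x : ℝ) :
    |x| ^ n * Real.exp (-(x ^ 2 / 4)) ≤ Real.exp 1 * n.factorial := by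
  have h1 : |x| ^ n / n.factorial ≤ Real.exp |x| := by
    refine le_trans ?_ (Real.sum_le_exp_of_nonneg (abs_nonneg x) (n + 1))
    exact Finset.single_le_sum (f := fun i => |x| ^ i / i.factorial)
      (fun i _ => by positivity) (Finset.self_mem_range_succ n)
  have h1' : |x| ^ n ≤ n.factorial * Real.exp |x| := by
    rw [div_le_iff₀ (by positivity)] at h1
    linarith [h1]
  have h3 : Real.exp (-(x ^ 2 / 4)) ≤ Real.exp (1 - |x|) := by
    apply Real.exp_le_exp.2
    nlinarith [sq_abs x, sq_nonneg (|x| - 2)]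
  calc |x| ^ n * Real.exp (-(x ^ 2 / 4))
      ≤ (n.factorial * Real.exp |x|) * Real.exp (1 - |x|) := by
        apply mul_le_mul h1' h3 (by positivity) (by positivity)
    _ = Real.exp 1 * n.factorial := by
        rw [mul_assoc, ← Real.exp_add]; ring_nf

lemma G_eq (x : ℝ) : G x = Real.exp (-(x ^ 2 / 4)) * Real.exp (-(x ^ 2 / 4)) := by
  rw [G, ← Real.exp_add]; ring_nf

lemma integrable_poly_gauss (p : ℝ[X]) : Integrable (fun x => p.eval x * G x) := by
  induction p using Polynomial.induction_on' with
  | add p q hp hq => simpa [add_mul] using hp.fun_add hq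
  | monomial n a =>
    have key : Integrable (fun x : ℝ => x ^ n * G x) := by
      have hg : Integrable (fun x : ℝ =>
          (Real.exp 1 * n.factorial) * Real.exp (-(4⁻¹ : ℝ) * x ^ 2)) :=
        (integrable_exp_neg_mul_sq (by norm_num)).const_mul _
      refine hg.mono' ?_ ?_
      · exact ((continuous_pow n).mul
          (Real.continuous_exp.comp (by fun_prop))).aestronglyMeasurable
      · refine ae_of_all _ fun x => ?_
        have hb := pow_mul_exp_le n x
        have h0 : (0:ℝ) < Real.exp (-(x ^ 2 / 4)) := Real.exp_pos _
        rw [Real.norm_eq_abs, abs_mul, abs_pow]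
        rw [G_eq, abs_of_nonneg (by positivity : (0:ℝ) ≤ Real.exp (-(x^2/4)) * Real.exp (-(x^2/4)))]
        have : |x| ^ n * (Real.exp (-(x ^ 2 / 4)) * Real.exp (-(x ^ 2 / 4)))
            ≤ (Real.exp 1 * n.factorial) * Real.exp (-(x ^ 2 / 4)) := by
          calc |x| ^ n * (Real.exp (-(x ^ 2 / 4)) * Real.exp (-(x ^ 2 / 4)))
              = (|x| ^ n * Real.exp (-(x ^ 2 / 4))) * Real.exp (-(x ^ 2 / 4)) := by ring
            _ ≤ (Real.exp 1 * n.factorial) * Real.exp (-(x ^ 2 / 4)) :=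
                mul_le_mul_of_nonneg_right hb h0.le
        refine this.trans_eq ?_
        congr 1
        congr 1
        ring
    have := key.const_mul a
    refine this.congr ?_
    refine ae_of_all _ fun x => ?_
    simp [eval_monomial]; ring

lemma hasDerivAt_G (x : ℝ) : HasDerivAt G (-x * G x) x := by
  have h : HasDerivAt (fun y : ℝ => -(y ^ 2 / 2)) (-x) x := by
    have := ((hasDerivAt_pow 2 x).div_const 2).fun_neg
    simpa using this
  rw [show G = fun x => Real.exp (-(x ^ 2 / 2)) from rfl]
  simpa [mul_comm] using h.exp

lemma hasDerivAt_poly_gauss (q : ℝ[X]) (x : ℝ) :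
    HasDerivAt (fun y => q.eval y * G y) ((derivative q - X * q).eval x * G x) x := by
  have h := (q.hasDerivAt x).fun_mul (hasDerivAt_G x)
  refine h.congr_deriv ?_
  simp [eval_sub, eval_mul]
  ring

lemma ibp (p q : ℝ[X]) :
    ∫ x, (p * (X * q - derivative q)).eval x * G x
      = ∫ x, (derivative p * q).eval x * G x := by
  have h := integral_mul_deriv_eq_deriv_mul_of_integrable
    (u := fun x => p.eval x) (u' := fun x => (derivative p).eval x)
    (v := fun x => q.eval x * G x)
    (v' := fun x => (derivative q - X * q).eval x * G x)
    (fun x _ => p.hasDerivAt x) (fun x _ => hasDerivAt_poly_gauss q x)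
    ?_ ?_ ?_
  · have e1 : ∀ x : ℝ, (p * (X * q - derivative q)).eval x * G x
        = -(p.eval x * ((derivative q - X * q).eval x * G x)) := by
      intro x; simp [eval_mul, eval_sub]; ring
    have e2 : ∀ x : ℝ, (derivative p * q).eval x * G x
        = (derivative p).eval x * (q.eval x * G x) := by
      intro x; simp [eval_mul]; ring
    simp_rw [e1, e2]
    rw [integral_neg, h, neg_neg]
  · refine (integrable_poly_gauss (p * (derivative q - X * q))).congr
      (ae_of_all _ fun x => ?_)
    simp [eval_mul]; ring
  · refine (integrable_poly_gauss (derivative p * q)).congr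
      (ae_of_all _ fun x => ?_)
    simp [eval_mul]; ring
  · refine (integrable_poly_gauss (p * q)).congr (ae_of_all _ fun x => ?_)
    simp [eval_mul]; ring

def Hr (n : ℕ) : ℝ[X] := (hermite n).map (Int.castRingHom ℝ)

lemma Hr_succ (n : ℕ) : Hr (n + 1) = X * Hr n - derivative (Hr n) := by
  simp [Hr, hermite_succ, Polynomial.map_sub, Polynomial.map_mul, Polynomial.map_X,
    derivative_map]

lemma Hr_zero : Hr 0 = 1 := by simp [Hr, hermite_zero]

lemma key (n : ℕ) : ∀ p : ℝ[X],
    ∫ x, (p * Hr n).eval x * G x = ∫ x, (derivative^[n] p).eval x * G x := by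
  induction n with
  | zero => intro p; simp [Hr_zero]
  | succ n ih =>
    intro p
    rw [Hr_succ, ibp p (Hr n), ih (derivative p), Function.iterate_succ_apply]

lemma Hr_monic (n : ℕ) : (Hr n).Monic :=
  (hermite_monic n).map _

lemma Hr_natDegree (n : ℕ) : (Hr n).natDegree = n := by
  rw [Hr, natDegree_map_eq_of_injective Int.cast_injective]
  exact natDegree_hermite

lemma iter_deriv_Hr (n : ℕ) : derivative^[n] (Hr n) = C (n.factorial : ℝ) := by
  have hdeg : (derivative^[n] (Hr n)).natDegree = 0 := by
    have := natDegree_iterate_derivative (Hr n) n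
    rw [Hr_natDegree] at this
    omega
  have heq := Polynomial.eq_C_of_natDegree_le_zero (le_of_eq hdeg)
  rw [heq]
  congr 1
  rw [coeff_iterate_derivative]
  have hc : (Hr n).coeff n = 1 := by
    have := (Hr_monic n).coeff_natDegree
    rwa [Hr_natDegree] at this
  simp [hc, Nat.descFactorial_self]

lemma integral_G : ∫ x, G x = Real.sqrt (2 * Real.pi) := by
  have h := integral_gaussian (1/2 : ℝ)
  have : ∀ x : ℝ, G x = Real.exp (-(1/2 : ℝ) * x ^ 2) := fun x => by
    rw [G]; ring_nf
  simp_rw [this]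
  rw [h]
  congr 1
  ring

lemma herm_sq_integral (n : ℕ) :
    ∫ x, (Hr n).eval x ^ 2 * G x = n.factorial * Real.sqrt (2 * Real.pi) := by
  have h1 : ∀ x : ℝ, (Hr n).eval x ^ 2 * G x = (Hr n * Hr n).eval x * G x := by
    intro x; rw [eval_mul, sq]
  simp_rw [h1, key n (Hr n), iter_deriv_Hr n]
  simp only [eval_C]
  rw [MeasureTheory.integral_const_mul, integral_G]

lemma aeval_eq_Hr (n : ℕ) (y : ℝ) :
    (Polynomial.aeval y) (hermite n) = (Hr n).eval y := by
  rw [Hr, eval_map, aeval_def]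
  rfl

lemma physHermite_eq (n : ℕ) (y : ℝ) :
    physHermite n (y / Real.sqrt 2) = (Real.sqrt 2) ^ n * (Hr n).eval y := by
  rw [physHermite, mul_div_cancel₀ _ (by positivity : Real.sqrt 2 ≠ 0), aeval_eq_Hr]

lemma cFun_sq (k : ℝ) (n : ℕ) (x : ℝ) :
    cFun k n x ^ 2
      = ((n.factorial : ℝ) * Real.sqrt (2 * Real.pi))⁻¹
        * ((Hr n).eval (x + k) ^ 2 * G (x + k)) := by
  have hZ : (0:ℝ) ≤ (2 : ℝ) ^ n * n.factorial * Real.sqrt Real.pi := by positivity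
  have h1 : ((2:ℝ) ^ (-(1:ℝ)/4)) ^ 2 = (Real.sqrt 2)⁻¹ := by
    rw [← Real.rpow_natCast ((2:ℝ) ^ (-(1:ℝ)/4)) 2, ← Real.rpow_mul (by norm_num)]
    rw [Real.sqrt_eq_rpow, ← Real.rpow_neg (by norm_num)]
    norm_num
  have h2 : (1 / Real.sqrt ((2 : ℝ) ^ n * n.factorial * Real.sqrt Real.pi)) ^ 2
      = 1 / ((2 : ℝ) ^ n * n.factorial * Real.sqrt Real.pi) := by
    rw [div_pow, one_pow, Real.sq_sqrt hZ]
  have h3 : ((Real.sqrt 2) ^ n) ^ 2 = (2:ℝ) ^ n := by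
    rw [← pow_mul, mul_comm n 2, pow_mul, Real.sq_sqrt (by norm_num : (0:ℝ) ≤ 2)]
  have h4 : Real.exp (-(x + k) ^ 2 / 4) ^ 2 = G (x + k) := by
    rw [sq, ← Real.exp_add, G]
    ring_nf
  have h5 : Real.sqrt (2 * Real.pi) = Real.sqrt 2 * Real.sqrt Real.pi :=
    Real.sqrt_mul (by norm_num) _
  rw [cFun, physHermite_eq]
  have expand : ((2 : ℝ) ^ (-(1 : ℝ) / 4) *
        (1 / Real.sqrt ((2 : ℝ) ^ n * n.factorial * Real.sqrt Real.pi)) *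
        ((Real.sqrt 2) ^ n * (Hr n).eval (x + k)) * Real.exp (-(x + k) ^ 2 / 4)) ^ 2
      = (((2:ℝ) ^ (-(1:ℝ)/4)) ^ 2
          * (1 / Real.sqrt ((2 : ℝ) ^ n * n.factorial * Real.sqrt Real.pi)) ^ 2
          * ((Real.sqrt 2) ^ n) ^ 2)
        * ((Hr n).eval (x + k) ^ 2 * Real.exp (-(x + k) ^ 2 / 4) ^ 2) := by ring
  rw [expand, h1, h2, h3, h4]
  congr 1
  have hs2 : Real.sqrt 2 ≠ 0 := by positivity
  have hsp : Real.sqrt Real.pi ≠ 0 := by positivity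
  have hf : (n.factorial : ℝ) ≠ 0 := by positivity
  have h2n : ((2:ℝ) ^ n) ≠ 0 := by positivity
  rw [h5]
  field_simp

lemma cFun_sq_integral (k : ℝ) (n : ℕ) : ∫ x, cFun k n x ^ 2 = 1 := by
  simp_rw [cFun_sq]
  rw [MeasureTheory.integral_const_mul]
  have ht : ∫ x : ℝ, (Hr n).eval (x + k) ^ 2 * G (x + k)
      = ∫ x, (Hr n).eval x ^ 2 * G x :=
    integral_add_right_eq_self (fun y => (Hr n).eval y ^ 2 * G y) k
  rw [ht, herm_sq_integral]
  have : ((n.factorial : ℝ) * Real.sqrt (2 * Real.pi)) ≠ 0 := by positivity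
  field_simp

lemma cFun_integrable_sq (k : ℝ) (n : ℕ) :
    Integrable (fun x => cFun k n x ^ 2) := by
  simp_rw [cFun_sq]
  have h0 : Integrable (fun x => (Hr n).eval x ^ 2 * G x) := by
    refine (integrable_poly_gauss (Hr n * Hr n)).congr (ae_of_all _ fun x => ?_)
    simp only [eval_mul, sq]
  have hmp : MeasurePreserving (fun x : ℝ => x + k) volume volume :=
    measurePreserving_add_right volume k
  have h1 : Integrable (fun x : ℝ => (Hr n).eval (x + k) ^ 2 * G (x + k)) :=
    (hmp.integrable_comp h0.aestronglyMeasurable).2 h0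
  exact h1.const_mul _

lemma cFun_continuous (k : ℝ) (n : ℕ) : Continuous (cFun k n) := by
  have h : Continuous fun y : ℝ => (Polynomial.aeval y) (hermite n) := by
    simp_rw [aeval_eq_Hr]
    exact (Hr n).continuous
  unfold cFun physHermite
  fun_prop

lemma cFun_memLp (k : ℝ) (n : ℕ) : MemLp (cFun k n) 2 (volume : Measure ℝ) :=
  (memLp_two_iff_integrable_sq
    (cFun_continuous k n).aestronglyMeasurable).2 (cFun_integrable_sq k n)

lemma cFun_eLpNorm (k : ℝ) (n : ℕ) :
    eLpNorm (cFun k n) 2 (volume : Measure ℝ) = 1 := by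
  rw [(cFun_memLp k n).eLpNorm_eq_integral_rpow_norm two_ne_zero ENNReal.ofNat_ne_top]
  have h2 : (2 : ℝ≥0∞).toReal = 2 := by simp
  rw [h2]
  have : ∀ a : ℝ, ‖cFun k n a‖ ^ (2:ℝ) = cFun k n a ^ 2 := by
    intro a
    rw [show ((2:ℝ)) = ((2:ℕ):ℝ) from by norm_num, Real.rpow_natCast,
      Real.norm_eq_abs, sq_abs]
  simp_rw [this, cFun_sq_integral]
  norm_num

end Stmt13Aux

theorem stmt13 (k : ℝ) (wA wB sA sB : ℝ → ℂ) (Nφ NΨ : ℂ)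
    (hwA : ContDiff ℝ (⊤ : ℕ∞) wA) (hwB : ContDiff ℝ (⊤ : ℕ∞) wB)
    (hsum : ∀ x : ℝ, wA x + wB x = (x : ℂ) + (k : ℂ))
    (hsA : ∀ x : ℝ, HasDerivAt sA (wA x) x)
    (hsB : ∀ x : ℝ, HasDerivAt sB (wB x) x)
    (hnorm : ∀ x : ℝ, sA x + sB x = (x : ℂ) ^ 2 / 2 + (k : ℂ) * (x : ℂ))
    -- φ_n = c_n ρ_A, Ψ_n = c_n ρ_B:
    (φ Ψ : ℕ → ℝ → ℂ)
    (hφ : ∀ n x, φ n x = (cFun k n x : ℂ) * rhoA k sA Nφ x)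
    (hΨ : ∀ n x, Ψ n x = (cFun k n x : ℂ) * rhoB k sB NΨ x)
    -- ρ_A, ρ_B essentially bounded:
    (hAinf : MemLp (rhoA k sA Nφ) ⊤ (volume : Measure ℝ))
    (hBinf : MemLp (rhoB k sB NΨ) ⊤ (volume : Measure ℝ)) :
    ∀ n : ℕ,
      MemLp (φ n) 2 (volume : Measure ℝ) ∧
      MemLp (Ψ n) 2 (volume : Measure ℝ) ∧
      eLpNorm (φ n) 2 (volume : Measure ℝ)
        ≤ eLpNorm (rhoA k sA Nφ) ⊤ (volume : Measure ℝ) ∧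
      eLpNorm (Ψ n) 2 (volume : Measure ℝ)
        ≤ eLpNorm (rhoB k sB NΨ) ⊤ (volume : Measure ℝ) := by
  intro n
  have hc := Stmt13Aux.cFun_memLp k n
  have hcn := Stmt13Aux.cFun_eLpNorm k n
  have hφf : φ n = (fun x => cFun k n x) • (rhoA k sA Nφ) := by
    funext x
    rw [hφ n x]
    simp [Pi.smul_apply', Complex.real_smul]
  have hΨf : Ψ n = (fun x => cFun k n x) • (rhoB k sB NΨ) := by
    funext x
    rw [hΨ n x]
    simp [Pi.smul_apply', Complex.real_smul]
  refine ⟨?_, ?_, ?_, ?_⟩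
  · rw [hφf]; exact hAinf.smul hc
  · rw [hΨf]; exact hBinf.smul hc
  · rw [hφf]
    calc eLpNorm ((fun x => cFun k n x) • (rhoA k sA Nφ)) 2 (volume : Measure ℝ)
        ≤ eLpNorm (cFun k n) 2 (volume : Measure ℝ)
            * eLpNorm (rhoA k sA Nφ) ⊤ (volume : Measure ℝ) :=
          eLpNorm_smul_le_eLpNorm_mul_eLpNorm_top 2 (rhoA k sA Nφ) hc.aestronglyMeasurable
      _ = eLpNorm (rhoA k sA Nφ) ⊤ (volume : Measure ℝ) := by rw [hcn, one_mul]
  · rw [hΨf]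
    calc eLpNorm ((fun x => cFun k n x) • (rhoB k sB NΨ)) 2 (volume : Measure ℝ)
        ≤ eLpNorm (cFun k n) 2 (volume : Measure ℝ)
            * eLpNorm (rhoB k sB NΨ) ⊤ (volume : Measure ℝ) :=
          eLpNorm_smul_le_eLpNorm_mul_eLpNorm_top 2 (rhoB k sB NΨ) hc.aestronglyMeasurable
      _ = eLpNorm (rhoB k sB NΨ) ⊤ (volume : Measure ℝ) := by rw [hcn, one_mul]

end
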